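/- Let q be an odd prime power, c ∈ F_q^*, and f(X) = c(X^{q+1} - X^2) on F_{q^2}. Then f has exactly (q-1)/2 cycles of length 2, i.e., exactly q-1 points of exact period 2. -/

import Mathlib

/-!
Let `σ x = x ^ q`, a ring involution of `K` fixing `c`, so that `f α = c (σ α · α - α ^ 2)`.
Then `f (f α) = -c³ u² s · α` with `u = σ α - α` and `s = σ α + α`; hence `α` has exact period 2
iff `c³ u² s = -1` (a fixed point would give `c u = 1`, which `σ u = -u` turns into `c u = -1`).
Since `2 ≠ 0`, `α` is determined by `(u, s)`, and `s` is determined by `u`, so these points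
correspond to the nonzero `u` with `σ u = -u`. That kernel of `x ↦ x ^ q + x` has exactly `q`
elements, as it and the image (inside the fixed points of `σ`) both have at most `q` elements.
-/

open Polynomial

lemma Polynomial.ncard_le_natDegree_of_forall_isRoot {R : Type*} [CommRing R] [IsDomain R]
    {p : R[X]} (hp : p ≠ 0) {s : Set R} (hs : ∀ x ∈ s, p.IsRoot x) : s.ncard ≤ p.natDegree :=
  calc s.ncard ≤ (p.rootSet R).ncard :=
        Set.ncard_le_ncard fun x hx => mem_rootSet.mpr ⟨hp, by simpa using hs x hx⟩
    _ ≤ p.natDegree := ncard_rootSet_le p R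

lemma AddMonoidHom.card_eq_card_ker_mul_card_range {G H : Type*} [AddGroup G] [AddGroup H]
    (g : G →+ H) : Nat.card G = Nat.card g.ker * Nat.card g.range := by
  rw [← AddSubgroup.index_ker, AddSubgroup.card_mul_index]

lemma FiniteField.exists_ringHom_eq_pow_of_dvd_card {K : Type*} [Field K] [Fintype K] {q : ℕ}
    (hq : q ∣ Fintype.card K) : ∃ σ : K →+* K, ∀ x, σ x = x ^ q := by
  obtain ⟨n, hp, hcard⟩ := FiniteField.card K (ringChar K)
  have : Fact (ringChar K).Prime := ⟨hp⟩
  obtain ⟨j, -, rfl⟩ := (Nat.dvd_prime_pow hp).mp (hcard ▸ hq)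
  exact ⟨iterateFrobenius K (ringChar K) j, fun x => iterateFrobenius_def ..⟩

lemma FiniteField.pow_pow_eq_self_of_card_eq_sq {K : Type*} [Field K] [Fintype K] {q : ℕ}
    (hK : Fintype.card K = q ^ 2) (x : K) : (x ^ q) ^ q = x := by
  rw [← pow_mul, ← sq, ← hK, FiniteField.pow_card]

lemma FiniteField.ncard_setOf_map_eq_neg {K : Type*} [Field K] [Fintype K] {q : ℕ}
    (hK : Fintype.card K = q ^ 2) (σ : K →+* K) (hσ : ∀ x, σ x = x ^ q) :
    {u : K | σ u = -u}.ncard = q := by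
  have hq : 1 < q := (Nat.one_lt_pow_iff two_ne_zero).mp (hK ▸ Fintype.one_lt_card)
  have hσσ (x : K) : σ (σ x) = x := by rw [hσ, hσ, pow_pow_eq_self_of_card_eq_sq hK]
  let g : K →+ K := σ.toAddMonoidHom + AddMonoidHom.id K
  have hker : {u : K | σ u = -u}.ncard ≤ q := by
    have hdeg : (X ^ q + X : K[X]).natDegree = q := by
      rw [natDegree_add_eq_left_of_natDegree_lt] <;> simp [hq]
    refine hdeg ▸ ncard_le_natDegree_of_forall_isRoot (ne_zero_of_natDegree_gt (hdeg ▸ hq)) ?_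
    intro u hu
    simp [← hσ, show σ u = -u from hu]
  have hrange : (g.range : Set K).ncard ≤ q := by
    have hdeg := FiniteField.X_pow_card_sub_X_natDegree_eq K hq
    refine hdeg ▸ ncard_le_natDegree_of_forall_isRoot (ne_zero_of_natDegree_gt (hdeg ▸ hq)) ?_
    rintro _ ⟨x, rfl⟩
    simp [g, ← hσ, hσσ, add_comm]
  have hcard : q ^ 2 = {u : K | σ u = -u}.ncard * (g.range : Set K).ncard := by
    rw [← hK, ← Nat.card_eq_fintype_card, g.card_eq_card_ker_mul_card_range,
      ← Nat.card_coe_set_eq, ← Nat.card_coe_set_eq]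
    congr 3
    ext u
    simp [g, eq_neg_iff_add_eq_zero]
  nlinarith

section NormSubSq

variable {K : Type*} [Field K] (σ : K →+* K) (c : K)

def normSubSq (α : K) : K := c * (σ α * α - α ^ 2)

variable {σ c}

lemma normSubSq_normSubSq (hσ : ∀ x, σ (σ x) = x) (hc : σ c = c) (α : K) :
    normSubSq σ c (normSubSq σ c α) = -(c ^ 3 * (σ α - α) ^ 2 * (σ α + α)) * α := by
  simp only [normSubSq, map_mul, map_sub, map_pow, hσ, hc]
  ring

lemma normSubSq_exact_period_two_iff (h2 : (2 : K) ≠ 0) (hσ : ∀ x, σ (σ x) = x) (hc : σ c = c)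
    (α : K) :
    (normSubSq σ c (normSubSq σ c α) = α ∧ normSubSq σ c α ≠ α) ↔
      c ^ 3 * (σ α - α) ^ 2 * (σ α + α) = -1 := by
  rw [normSubSq_normSubSq hσ hc]
  constructor
  · rintro ⟨hff, hf⟩
    have hα : α ≠ 0 := by rintro rfl; simp [normSubSq] at hf
    have : (c ^ 3 * (σ α - α) ^ 2 * (σ α + α) + 1) * α = 0 := by linear_combination -hff
    linear_combination (mul_eq_zero.mp this).resolve_right hα
  · intro h
    have hu : σ α - α ≠ 0 := by rintro hu; simp [hu] at h
    have hα : α ≠ 0 := by rintro rfl; simp at hu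
    refine ⟨by rw [h]; ring, fun hf => ?_⟩
    have hcu : c * (σ α - α) = 1 := by
      have : (c * (σ α - α) - 1) * α = 0 := by rw [normSubSq] at hf; linear_combination hf
      linear_combination (mul_eq_zero.mp this).resolve_right hα
    have hcu' := congrArg σ hcu
    simp only [map_mul, map_sub, map_one, hσ, hc] at hcu'
    exact h2 (by linear_combination -hcu - hcu')

lemma bijOn_map_sub_self (h2 : (2 : K) ≠ 0) (hσ : ∀ x, σ (σ x) = x) (hc : σ c = c)
    (hc0 : c ≠ 0) :
    Set.BijOn (fun α => σ α - α) {α : K | c ^ 3 * (σ α - α) ^ 2 * (σ α + α) = -1}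
      {u : K | σ u = -u ∧ u ≠ 0} := by
  refine ⟨fun α (hα : _ = _) => ⟨by simp [hσ], fun hu => by simp [hu] at hα⟩, ?_, ?_⟩
  · intro a (ha : _ = _) b (hb : _ = _) (hab : σ a - a = σ b - b)
    have hu : c ^ 3 * (σ a - a) ^ 2 ≠ 0 := by
      refine mul_ne_zero (pow_ne_zero _ hc0) (pow_ne_zero _ fun hu => ?_)
      simp [hu] at ha
    have hs : σ a + a = σ b + b := mul_left_cancel₀ hu (by rw [ha, hab, hb])
    exact mul_left_cancel₀ h2 (by linear_combination hs - hab)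
  · rintro u ⟨hσu, hu⟩
    have hcu : c ^ 3 * u ^ 2 ≠ 0 := mul_ne_zero (pow_ne_zero _ hc0) (pow_ne_zero _ hu)
    set s := -(c ^ 3 * u ^ 2)⁻¹
    have hσs : σ s = s := by simp [s, hc, hσu]
    have hσα : σ ((s - u) / 2) = (s + u) / 2 := by
      simp [map_div₀, map_ofNat, hσs, hσu, sub_neg_eq_add]
    have hdiff : σ ((s - u) / 2) - (s - u) / 2 = u := by rw [hσα]; field_simp; ring
    have hsum : σ ((s - u) / 2) + (s - u) / 2 = s := by rw [hσα]; field_simp; ring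
    refine ⟨(s - u) / 2, ?_, hdiff⟩
    change c ^ 3 * _ ^ 2 * _ = -1
    rw [hdiff, hsum, mul_neg, mul_inv_cancel₀ hcu]

end NormSubSq

/-- f(X) = c(X^{q+1} - X^2) has exactly (q-1)/2 cycles of length 2,
i.e. exactly q - 1 points of exact period 2. -/
theorem stmt_9 (q : ℕ) (hq : Odd q) (K : Type*) [Field K] [Fintype K]
    (hK : Fintype.card K = q ^ 2)
    (c : K) (hcF : c ^ q = c) (hc0 : c ≠ 0) :
    Set.ncard {α : K |
        c * ((c * (α ^ (q + 1) - α ^ 2)) ^ (q + 1) - (c * (α ^ (q + 1) - α ^ 2)) ^ 2) = α ∧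
        c * (α ^ (q + 1) - α ^ 2) ≠ α} = q - 1 := by
  obtain ⟨σ, hσ⟩ := FiniteField.exists_ringHom_eq_pow_of_dvd_card (hK ▸ dvd_pow_self q two_ne_zero)
  have hσσ (x : K) : σ (σ x) = x := by
    rw [hσ, hσ, FiniteField.pow_pow_eq_self_of_card_eq_sq hK]
  have hc : σ c = c := (hσ c).trans hcF
  have h2 : (2 : K) ≠ 0 := by
    refine Ring.two_ne_zero fun hchar => ?_
    rw [FiniteField.even_card_iff_char_two, hK, ← Nat.even_iff] at hchar
    exact Nat.not_even_iff_odd.mpr hq.pow hchar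
  have hf (α : K) : c * (α ^ (q + 1) - α ^ 2) = normSubSq σ c α := by
    rw [normSubSq, hσ, pow_succ]
  simp only [hf, normSubSq_exact_period_two_iff h2 hσσ hc]
  have hdiff : {u : K | σ u = -u ∧ u ≠ 0} = {u | σ u = -u} \ {0} := rfl
  rw [(bijOn_map_sub_self h2 hσσ hc hc0).ncard_eq, hdiff,
    Set.ncard_sdiff_singleton_of_mem (by simp), FiniteField.ncard_setOf_map_eq_neg hK σ hσ]
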